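/- Let Kol : ℕ → ℕ be Kolmogorov complexity with respect to a fixed universal partial computable function (Kol(x) is the least code of a program that outputs x). Then for every computably enumerable set W ⊆ ℕ × ℕ such that every pair (L, x) ∈ W satisfies L ≤ Kol(x), there exists a bound B ∈ ℕ such that L ≤ B for all (L, x) ∈ W. (This is the computational content of Chaitin's incompleteness theorem: an effective consistent theory T can prove statements of the form 'L ≤ Kol(x)' only for L below a fixed bound 𝓛(T) depending only on T.) -/

import Mathlib

/-!
Berry's paradox, made effective. By the recursion theorem there is a program `c` that enumerates
`W` until it meets a pair `(L, x)` with `L` larger than its own code, and then outputs `x`. If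
some pair of `W` had `L > c`, this search would halt, and `Kol x ≤ c < L ≤ Kol x`. So the code
of `c` bounds the first coordinates of `W`.
-/

namespace NumbersExtensions

noncomputable def Kol (x : ℕ) : ℕ :=
  sInf {c : ℕ | (Denumerable.ofNat Nat.Partrec.Code c).eval 0 = Part.some x}

open Encodable
open Nat.Partrec (Code)
open Nat.Partrec.Code

/-- The range of a partial recursive function is enumerated in stages: stage `⟪k, n⟫` runs the
computation on input `n` for `k` steps. -/
theorem Partrec.exists_computable_stages {α : Type*} [Primcodable α] {f : ℕ →. α}
    (hf : Partrec f) :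
    ∃ F : ℕ → Option α, Computable F ∧ ∀ a, (∃ n, a ∈ f n) ↔ ∃ k, F k = some a := by
  have hnat : Nat.Partrec fun n => (f n).map encode := by simpa [Partrec] using hf
  obtain ⟨c, hc⟩ := exists_code.1 hnat
  refine ⟨fun k => (evaln k.unpair.1 c k.unpair.2).bind decode, ?_, fun a => ⟨?_, ?_⟩⟩
  · have hrun : Primrec fun k : ℕ => evaln k.unpair.1 c k.unpair.2 :=
      primrec_evaln.comp (((Primrec.fst.comp Primrec.unpair).pair (Primrec.const c)).pair
        (Primrec.snd.comp Primrec.unpair))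
    exact (hrun.option_bind (Primrec.decode.comp Primrec.snd).to₂).to_comp
  · rintro ⟨n, ha⟩
    have hmem : encode a ∈ eval c n := by rw [hc]; exact Part.mem_map _ ha
    obtain ⟨k, hk⟩ := evaln_complete.1 hmem
    exact ⟨Nat.pair k n, by simp [Option.mem_def.1 hk]⟩
  · rintro ⟨k, hk⟩
    obtain ⟨e, he, hea⟩ := Option.bind_eq_some_iff.1 hk
    have hmem : e ∈ eval c k.unpair.2 := evaln_sound he
    rw [hc] at hmem
    obtain ⟨a', ha', rfl⟩ := (Part.mem_map_iff _).1 hmem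
    rw [encodek] at hea
    exact ⟨_, Option.some_injective _ hea ▸ ha'⟩

theorem kol_le_encode_of_mem_eval {c : Code} {x : ℕ} (hx : x ∈ eval c 0) : Kol x ≤ encode c := by
  refine Nat.sInf_le ?_
  change (Denumerable.ofNat Code (encode c)).eval 0 = Part.some x
  rw [Denumerable.ofNat_encode, Part.eq_some_iff.2 hx]

def searchAbove (F : ℕ → Option (ℕ × ℕ)) (b : ℕ) : Part ℕ :=
  Nat.rfindOpt fun k => (F k).bind fun p => if b < p.1 then some p.2 else none

theorem searchAbove_partrec {F : ℕ → Option (ℕ × ℕ)} (hF : Computable F) :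
    Partrec (searchAbove F) := by
  refine Partrec.rfindOpt (Computable.option_bind (hF.comp Computable.snd) ?_)
  refine (Primrec.ite ?_ (Primrec.option_some.comp (Primrec.snd.comp Primrec.snd))
    (Primrec.const none)).to_comp
  exact Primrec.nat_lt.comp (Primrec.fst.comp Primrec.fst) (Primrec.fst.comp Primrec.snd)

theorem searchAbove_dom {F : ℕ → Option (ℕ × ℕ)} {b k : ℕ} {p : ℕ × ℕ} (hk : F k = some p)
    (hp : b < p.1) : (searchAbove F b).Dom :=
  Nat.rfindOpt_dom.2 ⟨k, p.2, by simp [hk, hp]⟩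

theorem exists_of_mem_searchAbove {F : ℕ → Option (ℕ × ℕ)} {b x : ℕ}
    (hx : x ∈ searchAbove F b) : ∃ k L, F k = some (L, x) ∧ b < L := by
  obtain ⟨k, hk⟩ := Nat.rfindOpt_spec hx
  obtain ⟨⟨L, x'⟩, hkp, hx'⟩ := Option.bind_eq_some_iff.1 hk
  split_ifs at hx' with hL
  cases hx'
  exact ⟨k, L, hkp, hL⟩

theorem chaitin_incompleteness (W : Set (ℕ × ℕ))
    (hce : ∃ f : ℕ →. ℕ × ℕ, Partrec f ∧ W = {p | ∃ n, p ∈ f n})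
    (hW : ∀ p ∈ W, p.1 ≤ Kol p.2) :
    ∃ B : ℕ, ∀ p ∈ W, p.1 ≤ B := by
  obtain ⟨f, hf, rfl⟩ := hce
  obtain ⟨F, hF, hFW⟩ := Partrec.exists_computable_stages hf
  obtain ⟨c, hc⟩ := fixed_point₂ (f := fun c (_ : ℕ) => searchAbove F (encode c))
    ((searchAbove_partrec hF).comp (Computable.encode.comp Computable.fst))
  refine ⟨encode c, fun p hp => le_of_not_gt fun hlt => ?_⟩
  obtain ⟨k, hk⟩ := (hFW p).1 hp
  have hdom := searchAbove_dom hk hlt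
  have hx : (searchAbove F (encode c)).get hdom ∈ eval c 0 := by rw [hc]; exact Part.get_mem hdom
  obtain ⟨k', L, hk', hL⟩ := exists_of_mem_searchAbove (Part.get_mem hdom)
  have hLW := hW _ ((hFW _).2 ⟨k', hk'⟩)
  exact hL.not_ge (hLW.trans (kol_le_encode_of_mem_eval hx))

end NumbersExtensions
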